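/- Let R be a commutative ring, let M and N be finitely generated projective R-modules, and let d ≥ 0. Then the R-module P^d(M, N) of polynomial laws from M to N that are homogeneous of degree d is a finitely generated projective R-module. -/

import Mathlib

open TensorProduct

universe u

variable (R : Type u) [CommRing R]

/-- The type of families of functions `S ⊗[R] M → S ⊗[R] N`, one for each commutative
`R`-algebra `S` (no naturality required). -/
abbrev RawLaw (M N : Type u) [AddCommGroup M] [Module R M] [AddCommGroup N] [Module R N] :
    Type (u + 1) :=
  ∀ (S : Type u) [CommRing S] [Algebra R S], S ⊗[R] M → S ⊗[R] N

variable (M N : Type u) [AddCommGroup M] [Module R M] [AddCommGroup N] [Module R N]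

/-- Naturality: such a family is a polynomial law (in the sense of Roby) if it commutes
with the maps induced by every `R`-algebra homomorphism. -/
def IsPolyLaw (f : RawLaw R M N) : Prop :=
  ∀ (S S' : Type u) [CommRing S] [Algebra R S] [CommRing S'] [Algebra R S']
    (φ : S →ₐ[R] S') (x : S ⊗[R] M),
    LinearMap.rTensor N φ.toLinearMap (f S x) = f S' (LinearMap.rTensor M φ.toLinearMap x)

/-- Homogeneity of degree `d`. -/
def IsHomog (d : ℕ) (f : RawLaw R M N) : Prop :=
  ∀ (S : Type u) [CommRing S] [Algebra R S] (s : S) (x : S ⊗[R] M),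
    f S (s • x) = s ^ d • f S x

/-- The `R`-module `P^d(M, N)` of polynomial laws from `M` to `N` homogeneous of
degree `d`, as a submodule of the module of raw families. -/
noncomputable def polyLawHomog (d : ℕ) : Submodule R (RawLaw R M N) where
  carrier := {f | IsPolyLaw R M N f ∧ IsHomog R M N d f}
  add_mem' := by
    rintro f g ⟨hf1, hf2⟩ ⟨hg1, hg2⟩
    constructor
    · intro S S' _ _ _ _ φ x
      show LinearMap.rTensor N φ.toLinearMap (f S x + g S x)
          = f S' (LinearMap.rTensor M φ.toLinearMap x) + g S' (LinearMap.rTensor M φ.toLinearMap x)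
      rw [map_add, hf1 S S' φ x, hg1 S S' φ x]
    · intro S _ _ s xx
      show f S (s • xx) + g S (s • xx) = s ^ d • (f S xx + g S xx)
      rw [hf2 S s xx, hg2 S s xx, smul_add]
  zero_mem' := by
    constructor
    · intro S S' _ _ _ _ φ x
      show LinearMap.rTensor N φ.toLinearMap 0 = (0 : S' ⊗[R] N)
      rw [map_zero]
    · intro S _ _ s xx
      show (0 : S ⊗[R] N) = s ^ d • (0 : S ⊗[R] N)
      rw [smul_zero]
  smul_mem' := by
    rintro r f ⟨hf1, hf2⟩
    constructor
    · intro S S' _ _ _ _ φ x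
      show LinearMap.rTensor N φ.toLinearMap (r • f S x)
          = r • f S' (LinearMap.rTensor M φ.toLinearMap x)
      rw [map_smul, hf1 S S' φ x]
    · intro S _ _ s xx
      show r • f S (s • xx) = s ^ d • (r • f S xx)
      rw [hf2 S s xx, smul_comm]

/-!
Choose a finite dual basis `(κᵢ, eᵢ)` of `M`. Every `x ∈ S ⊗ M` is the image of the generic
element `G = ∑ Xᵢ ⊗ eᵢ ∈ R[X] ⊗ M` under `Xᵢ ↦ κᵢ(x)`, so by naturality a polynomial law `f` is
determined by `f(G) ∈ R[X] ⊗ N`. If `f` is homogeneous of degree `d`, comparing naturality along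
`Xᵢ ↦ T Xᵢ` with homogeneity in `T` shows that `f(G)` only involves monomials of degree `d`.
Hence `f ↦ (coefficients of f(G))` exhibits `P^d(M, N)` as a direct summand of `N^D`, where `D`
is the finite set of exponents of degree `d`.
-/

open MvPolynomial

theorem Finsupp.prod_mul_pow {ι S : Type*} [CommMonoid S] (α : ι →₀ ℕ) (s : S) (t : ι → S) :
    (α.prod fun i k => (s * t i) ^ k) = s ^ α.degree * α.prod fun i k => t i ^ k := by
  simp only [Finsupp.prod, mul_pow, Finset.prod_mul_distrib, Finset.prod_pow_eq_pow_sum,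
    Finsupp.degree]
  rfl

section DegreeExponents

variable {ι : Type*} [Fintype ι] [DecidableEq ι]

theorem Finset.mem_finsuppAntidiag_univ {β : ι →₀ ℕ} {d : ℕ} :
    β ∈ (univ : Finset ι).finsuppAntidiag d ↔ β.degree = d := by
  simp [Finset.mem_finsuppAntidiag, Finsupp.degree_eq_sum]

instance (d : ℕ) : Fintype {β : ι →₀ ℕ // β.degree = d} :=
  .subtype _ fun _ => Finset.mem_finsuppAntidiag_univ

end DegreeExponents

instance Module.Projective.pi_of_fintype {A : Type*} [Semiring A] {ι : Type*} [Fintype ι]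
    {P : Type*} [AddCommMonoid P] [Module A P] [Module.Projective A P] :
    Module.Projective A (ι → P) :=
  .of_equiv (DFinsupp.linearEquivFunOnFintype (ι := ι) (M := fun _ => P))

theorem Module.Projective.exists_dual_basis (A P : Type*) [CommRing A] [AddCommGroup P]
    [Module A P] [Module.Finite A P] [Module.Projective A P] :
    ∃ (n : ℕ) (κ : Fin n → Module.Dual A P) (e : Fin n → P), ∀ p, ∑ i, κ i p • e i = p := by
  obtain ⟨n, π, σ, -, -, hπσ⟩ := Module.Finite.exists_comp_eq_id_of_projective A P
  refine ⟨n, fun i => LinearMap.proj i ∘ₗ σ, fun i => π (Pi.single i 1), fun p => ?_⟩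
  simp_rw [LinearMap.comp_apply, LinearMap.proj_apply, ← map_smul, ← map_sum, ← Pi.single_smul,
    smul_eq_mul, mul_one, Finset.univ_sum_single]
  exact LinearMap.congr_fun hπσ p

section BaseChange

variable {A V : Type*} [CommRing A] [AddCommGroup V] [Module A V]

theorem Module.Dual.baseChange_rTensor {S S' : Type*} [CommRing S] [Algebra A S] [CommRing S']
    [Algebra A S'] (φ : S →ₐ[A] S') (f : Module.Dual A V) (x : S ⊗[A] V) :
    f.baseChange S' (φ.toLinearMap.rTensor V x) = φ (f.baseChange S x) := by
  induction x using TensorProduct.induction_on with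
  | zero => simp
  | tmul s v => simp
  | add x y hx hy => simp only [map_add, hx, hy]

theorem Module.Dual.sum_baseChange_tmul {ι : Type*} [Fintype ι] {κ : ι → Module.Dual A V}
    {e : ι → V} (hκe : ∀ v, ∑ i, κ i v • e i = v) (S : Type*) [CommRing S] [Algebra A S]
    (x : S ⊗[A] V) :
    ∑ i, (κ i).baseChange S x ⊗ₜ[A] e i = x := by
  induction x using TensorProduct.induction_on with
  | zero => simp
  | tmul s v =>
    simp only [Module.Dual.baseChange_apply_tmul, TensorProduct.smul_tmul,
      ← TensorProduct.tmul_sum, hκe]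
  | add x y hx hy => simp only [map_add, TensorProduct.add_tmul, Finset.sum_add_distrib, hx, hy]

end BaseChange

namespace MvPolynomial

variable {A : Type*} [CommRing A] {ι : Type*}

variable (A ι) in
noncomputable def scaleVars : MvPolynomial ι A →ₐ[A] Polynomial (MvPolynomial ι A) :=
  aeval fun i => Polynomial.X * Polynomial.C (X i)

theorem scaleVars_monomial (γ : ι →₀ ℕ) (a : A) :
    scaleVars A ι (monomial γ a) = Polynomial.X ^ γ.degree * Polynomial.C (monomial γ a) := by
  rw [scaleVars, aeval_monomial, Finsupp.prod_mul_pow, monomial_eq, map_mul, map_finsuppProd]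
  simp only [map_pow, algebraMap_eq, Polynomial.algebraMap_apply]
  ring

theorem coeff_coeff_scaleVars (β : ι →₀ ℕ) (p : MvPolynomial ι A) :
    coeff β ((scaleVars A ι p).coeff β.degree) = coeff β p := by
  classical
  induction p using MvPolynomial.induction_on' with
  | monomial γ a =>
    rw [scaleVars_monomial, mul_comm, Polynomial.coeff_C_mul_X_pow, coeff_monomial]
    split_ifs <;> simp_all [coeff_monomial]
  | add p q hp hq => simp only [map_add, Polynomial.coeff_add, coeff_add, hp, hq]

end MvPolynomial

section TensorCoefficients

variable {A Q : Type*} [CommRing A] [AddCommGroup Q] [Module A Q] {ι : Type*} [DecidableEq ι]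

theorem equivFinsuppOfBasisLeft_basisMonomials_eq_zero {y : MvPolynomial ι A ⊗[A] Q} {d : ℕ}
    (hy : (scaleVars A ι).toLinearMap.rTensor Q y =
      (Polynomial.X : Polynomial (MvPolynomial ι A)) ^ d •
        (Polynomial.CAlgHom (R := A)).toLinearMap.rTensor Q y)
    {β : ι →₀ ℕ} (hβ : β.degree ≠ d) :
    equivFinsuppOfBasisLeft (basisMonomials ι A) y β = 0 := by
  set Λ : Polynomial (MvPolynomial ι A) ⊗[A] Q →ₗ[A] Q := TensorProduct.lid A Q ∘ₗ
    (lcoeff A β ∘ₗ (Polynomial.lcoeff _ β.degree).restrictScalars A).rTensor Q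
  have hΛθ : Λ ∘ₗ (scaleVars A ι).toLinearMap.rTensor Q =
      TensorProduct.lid A Q ∘ₗ (lcoeff A β).rTensor Q := by
    have : (lcoeff A β ∘ₗ (Polynomial.lcoeff _ β.degree).restrictScalars A) ∘ₗ
        (scaleVars A ι).toLinearMap = lcoeff A β :=
      LinearMap.ext (coeff_coeff_scaleVars β)
    rw [LinearMap.comp_assoc, ← LinearMap.rTensor_comp, this]
  have hΛC (z : MvPolynomial ι A ⊗[A] Q) : Λ ((Polynomial.X : Polynomial (MvPolynomial ι A)) ^ d •
      (Polynomial.CAlgHom (R := A)).toLinearMap.rTensor Q z) = 0 := by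
    induction z using TensorProduct.induction_on with
    | zero => simp
    | tmul p q => simp [Λ, TensorProduct.smul_tmul', hβ]
    | add z z' hz hz' => rw [map_add, smul_add, map_add, hz, hz', add_zero]
  rw [equivFinsuppOfBasisLeft_apply, ← hΛC y, ← hy, ← LinearMap.comp_apply, hΛθ]
  rfl

theorem sum_monomial_tmul_equivFinsuppOfBasisLeft [Fintype ι] {y : MvPolynomial ι A ⊗[A] Q}
    {d : ℕ}
    (hy : ∀ β : ι →₀ ℕ, β.degree ≠ d → equivFinsuppOfBasisLeft (basisMonomials ι A) y β = 0) :
    ∑ α : {β : ι →₀ ℕ // β.degree = d},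
      monomial α.1 1 ⊗ₜ equivFinsuppOfBasisLeft (basisMonomials ι A) y α = y := by
  set c := equivFinsuppOfBasisLeft (basisMonomials ι A) y
  have hc : c.support ⊆ (Finset.univ : Finset ι).finsuppAntidiag d := fun β hβ =>
    Finset.mem_finsuppAntidiag_univ.2 (not_imp_comm.1 (hy β) (Finsupp.mem_support_iff.1 hβ))
  conv_rhs => rw [← (equivFinsuppOfBasisLeft (basisMonomials ι A)).symm_apply_apply y]
  rw [equivFinsuppOfBasisLeft_symm_apply, Finsupp.sum_of_support_subset c hc _ (by simp)]
  exact (Finset.sum_subtype _ (fun _ => Finset.mem_finsuppAntidiag_univ)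
    fun β => monomial β (1 : A) ⊗ₜ[A] c β).symm

end TensorCoefficients

section PolyLawOfTensor

variable {R M N} {ι : Type}

variable (N) in
noncomputable def polyLawOfTensor (κ : ι → Module.Dual R M) :
    MvPolynomial ι R ⊗[R] N →ₗ[R] RawLaw R M N where
  toFun y S _ _ x := (aeval fun i => (κ i).baseChange S x).toLinearMap.rTensor N y
  map_add' _ _ := by funext; exact map_add _ _ _
  map_smul' _ _ := by funext; exact map_smul _ _ _

theorem isPolyLaw_polyLawOfTensor (κ : ι → Module.Dual R M) (y : MvPolynomial ι R ⊗[R] N) :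
    IsPolyLaw R M N (polyLawOfTensor N κ y) := by
  intro S S' _ _ _ _ φ x
  simp only [polyLawOfTensor, LinearMap.coe_mk, AddHom.coe_mk, ← LinearMap.rTensor_comp_apply,
    ← AlgHom.comp_toLinearMap, comp_aeval, Module.Dual.baseChange_rTensor]

theorem isHomog_polyLawOfTensor_monomial_tmul (κ : ι → Module.Dual R M) (α : ι →₀ ℕ) (n : N) :
    IsHomog R M N α.degree (polyLawOfTensor N κ (monomial α 1 ⊗ₜ n)) := by
  intro S _ _ s x
  simp only [polyLawOfTensor, LinearMap.coe_mk, AddHom.coe_mk, LinearMap.rTensor_tmul,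
    AlgHom.toLinearMap_apply, TensorProduct.smul_tmul', map_smul, aeval_monomial, map_one,
    one_mul, smul_eq_mul, Finsupp.prod_mul_pow]

variable [Fintype ι]

noncomputable def genericElem (e : ι → M) : MvPolynomial ι R ⊗[R] M := ∑ i, X i ⊗ₜ[R] e i

theorem rTensor_aeval_genericElem (e : ι → M) {S : Type*} [CommRing S] [Algebra R S]
    (t : ι → S) : (aeval t).toLinearMap.rTensor M (genericElem (R := R) e) = ∑ i, t i ⊗ₜ e i := by
  simp [genericElem]

theorem rTensor_scaleVars_genericElem (e : ι → M) :
    (scaleVars R ι).toLinearMap.rTensor M (genericElem e) =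
      (Polynomial.X : Polynomial (MvPolynomial ι R)) •
        (Polynomial.CAlgHom (R := R)).toLinearMap.rTensor M (genericElem e) := by
  simp [genericElem, scaleVars, Finset.smul_sum, TensorProduct.smul_tmul']

theorem polyLawOfTensor_apply_genericElem {κ : ι → Module.Dual R M} {e : ι → M}
    (hκe : ∀ m, ∑ i, κ i m • e i = m) {f : RawLaw R M N} (hf : IsPolyLaw R M N f) :
    polyLawOfTensor N κ (f _ (genericElem e)) = f := by
  funext S _ _ x
  simp only [polyLawOfTensor, LinearMap.coe_mk, AddHom.coe_mk]
  rw [hf, rTensor_aeval_genericElem, Module.Dual.sum_baseChange_tmul hκe]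

theorem coeff_apply_genericElem_eq_zero [DecidableEq ι] {d : ℕ} {f : RawLaw R M N}
    (hf : IsPolyLaw R M N f) (hd : IsHomog R M N d f) (e : ι → M) {β : ι →₀ ℕ}
    (hβ : β.degree ≠ d) :
    equivFinsuppOfBasisLeft (basisMonomials ι R) (f _ (genericElem e)) β = 0 := by
  refine equivFinsuppOfBasisLeft_basisMonomials_eq_zero ?_ hβ
  rw [hf, rTensor_scaleVars_genericElem, hd, hf]

end PolyLawOfTensor

section Retract

variable {R M N} {ι : Type} [Fintype ι] [DecidableEq ι]

variable (N) in
noncomputable def lawOfCoeffs (κ : ι → Module.Dual R M) (d : ℕ) :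
    ({β : ι →₀ ℕ // β.degree = d} → N) →ₗ[R] polyLawHomog R M N d where
  toFun c := ⟨polyLawOfTensor N κ (∑ α : {β : ι →₀ ℕ // β.degree = d}, monomial α.1 1 ⊗ₜ c α), by
    rw [map_sum]
    refine Submodule.sum_mem _ fun α _ => ⟨isPolyLaw_polyLawOfTensor κ _, ?_⟩
    simpa [α.2] using isHomog_polyLawOfTensor_monomial_tmul κ α.1 (c α)⟩
  map_add' c c' := Subtype.ext <| by simp [TensorProduct.tmul_add, Finset.sum_add_distrib]
  map_smul' r c := Subtype.ext <| by simp [Finset.smul_sum]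

noncomputable def genericCoeffs (e : ι → M) (d : ℕ) :
    polyLawHomog R M N d →ₗ[R] ({β : ι →₀ ℕ // β.degree = d} → N) where
  toFun f α := equivFinsuppOfBasisLeft (basisMonomials ι R) (f.1 _ (genericElem e)) α
  map_add' f g := by funext α; simp
  map_smul' r f := by funext α; simp

theorem lawOfCoeffs_genericCoeffs {κ : ι → Module.Dual R M} {e : ι → M}
    (hκe : ∀ m, ∑ i, κ i m • e i = m) {d : ℕ} (f : polyLawHomog R M N d) :
    lawOfCoeffs N κ d (genericCoeffs e d f) = f := by
  obtain ⟨f, hf, hd⟩ := f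
  refine Subtype.ext ?_
  simp only [lawOfCoeffs, genericCoeffs, LinearMap.coe_mk, AddHom.coe_mk]
  rw [sum_monomial_tmul_equivFinsuppOfBasisLeft fun β hβ =>
      coeff_apply_genericElem_eq_zero hf hd e hβ, polyLawOfTensor_apply_genericElem hκe hf]

end Retract

theorem stmt_3 [Module.Finite R M] [Module.Projective R M]
    [Module.Finite R N] [Module.Projective R N] (d : ℕ) :
    Module.Finite R (polyLawHomog R M N d) ∧ Module.Projective R (polyLawHomog R M N d) := by
  obtain ⟨n, κ, e, hκe⟩ := Module.Projective.exists_dual_basis R M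
  have hsplit : lawOfCoeffs N κ d ∘ₗ genericCoeffs e d = .id :=
    LinearMap.ext (lawOfCoeffs_genericCoeffs hκe)
  exact ⟨.of_surjective _ (LinearMap.surjective_of_comp_eq_id _ _ hsplit), .of_split _ _ hsplit⟩
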